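/- Let Y be a square-integrable real random variable and let X_1, …, X_N be square-integrable reliable forecasts of Y, i.e., E[Y | σ(X_j)] = X_j almost surely for each j. Let w_1, …, w_N be nonnegative reals with w_1 + … + w_N = 1, set X_w = Σ_{j=1}^N w_j X_j, and let X'' = E[Y | σ(X_1, …, X_N)] be the revealed aggregator. Then Var(X_w) ≤ Var(X''); that is, the weighted average is as close or closer to the marginal mean than the revealed aggregator. -/

import Mathlib

open MeasureTheory ProbabilityTheory

section Aux
/-- For an `L²` function, the conditional expectation agrees a.e. with `condExpL2`. -/
lemma condexp_ae_eq_condExpL2_aux {Ω : Type*} {m F : MeasurableSpace Ω} {μ : Measure Ω}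
    [IsProbabilityMeasure μ] (hm : m ≤ F)
    {Z : Ω → ℝ} (hZ : MemLp Z 2 μ) :
    μ[Z|m] =ᵐ[μ] (condExpL2 ℝ ℝ hm (hZ.toLp Z) : Ω → ℝ) := by
  refine (ae_eq_condExp_of_forall_setIntegral_eq hm (hZ.integrable one_le_two)
    (fun s _ _ => ?_) (fun s hs hμs => ?_) ?_).symm
  · exact ((Lp.memLp _).integrable one_le_two).integrableOn
  · rw [integral_condExpL2_eq hm (hZ.toLp Z) hs hμs.ne]
    exact setIntegral_congr_ae (hm s hs) (hZ.coeFn_toLp.mono fun x hx _ => hx)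
  · exact lpMeas.aestronglyMeasurable _

lemma memℒp_two_condexp_aux {Ω : Type*} {m F : MeasurableSpace Ω} {μ : Measure Ω}
    [IsProbabilityMeasure μ] (hm : m ≤ F)
    {Z : Ω → ℝ} (hZ : MemLp Z 2 μ) : MemLp (μ[Z|m]) 2 μ :=
  (Lp.memLp ((condExpL2 ℝ ℝ hm (hZ.toLp Z) : lpMeas ℝ ℝ m 2 μ) : Lp ℝ 2 μ)).ae_eq
    (condexp_ae_eq_condExpL2_aux hm hZ).symm

lemma eLpNorm_two_condexp_le_aux {Ω : Type*} {m F : MeasurableSpace Ω} {μ : Measure Ω}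
    [IsProbabilityMeasure μ] (hm : m ≤ F)
    {Z : Ω → ℝ} (hZ : MemLp Z 2 μ) :
    eLpNorm (μ[Z|m]) 2 μ ≤ eLpNorm Z 2 μ := by
  rw [eLpNorm_congr_ae (condexp_ae_eq_condExpL2_aux hm hZ)]
  refine (eLpNorm_condExpL2_le hm (hZ.toLp Z)).trans_eq ?_
  exact eLpNorm_congr_ae hZ.coeFn_toLp

lemma evariance_eq_sq_aux {Ω : Type*} {F : MeasurableSpace Ω} {μ : Measure Ω} (X : Ω → ℝ) :
    evariance X μ = eLpNorm (fun ω => X ω - μ[X]) 2 μ ^ 2 := by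
  rw [evariance, eLpNorm_eq_lintegral_rpow_enorm_toReal two_ne_zero ENNReal.ofNat_ne_top]
  simp only [ENNReal.toReal_ofNat, one_div, ← ENNReal.rpow_two, ← ENNReal.rpow_natCast,
    ← ENNReal.rpow_mul]
  norm_num

end Aux

/-- The weighted average of reliable forecasts is as close or closer to the marginal mean
than the revealed aggregator: `Var(X_w) ≤ Var(X'')`, where `X_w = Σ_j w_j X_j` and
`X'' = E[Y | σ(X_1, …, X_N)]`. -/
theorem variance_weightedAverage_le_revealed {Ω : Type*} {F : MeasurableSpace Ω}
    (μ : Measure Ω) [IsProbabilityMeasure μ]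
    (Y : Ω → ℝ) (hY : MemLp Y 2 μ)
    (N : ℕ) (X : Fin N → Ω → ℝ)
    (hXmeas : ∀ j, Measurable (X j))
    (hX2 : ∀ j, MemLp (X j) 2 μ)
    (hrel : ∀ j, μ[Y | MeasurableSpace.comap (X j) Real.measurableSpace] =ᵐ[μ] X j)
    (w : Fin N → ℝ) (hw : ∀ j, 0 ≤ w j) (hw1 : ∑ j, w j = 1) :
    variance (fun ω => ∑ j, w j * X j ω) μ ≤
      variance (μ[Y | ⨆ j, MeasurableSpace.comap (X j) Real.measurableSpace]) μ := by
  set m : MeasurableSpace Ω := ⨆ j, MeasurableSpace.comap (X j) Real.measurableSpace with hm_def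
  have hm : m ≤ F := iSup_le fun j => (hXmeas j).comap_le
  have hGm : ∀ j, MeasurableSpace.comap (X j) Real.measurableSpace ≤ m :=
    fun j => le_iSup (fun j => MeasurableSpace.comap (X j) Real.measurableSpace) j
  have hGF : ∀ j, MeasurableSpace.comap (X j) Real.measurableSpace ≤ F :=
    fun j => (hXmeas j).comap_le
  set X'' : Ω → ℝ := μ[Y|m] with hX''_def
  have hX''2 : MemLp X'' 2 μ := memℒp_two_condexp_aux hm hY
  set c : ℝ := μ[Y] with hc_def
  -- mean of X''
  have hmeanX'' : μ[X''] = c := integral_condExp hm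
  -- X j is the condexp of X'' on its own σ-algebra
  have hXj : ∀ j, μ[X'' | MeasurableSpace.comap (X j) Real.measurableSpace] =ᵐ[μ] X j :=
    fun j => (condExp_condExp_of_le (hGm j) hm).trans (hrel j)
  -- mean of each X j
  have hmeanXj : ∀ j, μ[X j] = c := by
    intro j
    rw [← integral_congr_ae (hrel j), integral_condExp (hGF j)]
  -- mean of the weighted average
  have hint : ∀ j, Integrable (X j) μ := fun j => (hX2 j).integrable one_le_two
  have hmeanW : μ[fun ω => ∑ j, w j * X j ω] = c := by
    rw [integral_finset_sum _ (fun j _ => (hint j).const_mul (w j))]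
    simp_rw [integral_const_mul, hmeanXj, ← Finset.sum_mul, hw1, one_mul]
  -- centered X''
  set Z : Ω → ℝ := fun ω => X'' ω - c with hZ_def
  have hZ2 : MemLp Z 2 μ := hX''2.sub (memLp_const c)
  -- centered X j is the condexp of Z
  have hXjc : ∀ j, μ[Z | MeasurableSpace.comap (X j) Real.measurableSpace]
      =ᵐ[μ] fun ω => X j ω - c := by
    intro j
    have h1 := condExp_sub (m := MeasurableSpace.comap (X j) Real.measurableSpace)
      (hX''2.integrable one_le_two) (integrable_const c) (μ := μ)
    have h2 : μ[(fun _ => c) | MeasurableSpace.comap (X j) Real.measurableSpace]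
        = fun _ => c := condExp_const (hGF j) c
    refine h1.trans ?_
    rw [h2]
    filter_upwards [hXj j] with ω hω
    simp [hω]
  -- L² norm bound for each centered X j
  have hnorm : ∀ j, eLpNorm (fun ω => X j ω - c) 2 μ ≤ eLpNorm Z 2 μ := by
    intro j
    rw [← eLpNorm_congr_ae (hXjc j)]
    exact eLpNorm_two_condexp_le_aux (hGF j) hZ2
  -- the key eLpNorm inequality
  have hkey : eLpNorm (fun ω => (∑ j, w j * X j ω) - c) 2 μ ≤ eLpNorm Z 2 μ := by
    have hrw : (fun ω => (∑ j, w j * X j ω) - c)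
        = ∑ j, fun ω => w j • (X j ω - c) := by
      funext ω
      simp only [Finset.sum_apply, smul_eq_mul, mul_sub, Finset.sum_sub_distrib,
        ← Finset.sum_mul, hw1, one_mul]
    rw [hrw]
    calc eLpNorm (∑ j, fun ω => w j • (X j ω - c)) 2 μ
        ≤ ∑ j, eLpNorm (fun ω => w j • (X j ω - c)) 2 μ := by
          refine eLpNorm_sum_le (fun j _ => ?_) one_le_two
          exact (((hX2 j).aestronglyMeasurable.sub aestronglyMeasurable_const).const_smul (w j))
      _ = ∑ j, (‖w j‖₊ : ENNReal) * eLpNorm (fun ω => X j ω - c) 2 μ := by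
          refine Finset.sum_congr rfl fun j _ => ?_
          exact eLpNorm_const_smul (w j) (fun ω => X j ω - c) 2 μ
      _ ≤ ∑ j, (‖w j‖₊ : ENNReal) * eLpNorm Z 2 μ := by
          exact Finset.sum_le_sum fun j _ => mul_le_mul_right (hnorm j) _
      _ = (∑ j, (‖w j‖₊ : ENNReal)) * eLpNorm Z 2 μ := by rw [Finset.sum_mul]
      _ = eLpNorm Z 2 μ := by
          have : (∑ j, (‖w j‖₊ : ENNReal)) = 1 := by
            simp_rw [← enorm_eq_nnnorm, fun j => Real.enorm_eq_ofReal (hw j)]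
            rw [← ENNReal.ofReal_sum_of_nonneg (fun j _ => hw j), hw1, ENNReal.ofReal_one]
          rw [this, one_mul]
  -- conclude on evariance
  have hev : evariance (fun ω => ∑ j, w j * X j ω) μ ≤ evariance X'' μ := by
    rw [evariance_eq_sq_aux, evariance_eq_sq_aux, hmeanW, hmeanX'']
    exact pow_le_pow_left' hkey 2
  have hfin : evariance X'' μ ≠ ⊤ := hX''2.evariance_lt_top.ne
  exact ENNReal.toReal_mono hfin hev
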